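/- Let G = (Q, A, T) be a structurally-reversible I-unfolding of a Petri net A, with r := |Q| and m := ‖A‖∞. For every simple cycle θ_s of G there exists a full-state cycle θ of G with Δ(θ) = Δ(θ_s) and length |θ| ≤ r²(r−1)(3drm)^d + r. -/

import Mathlib

open scoped BigOperators

/-- A configuration is a vector in `ℕ^d`. -/
abbrev Cfg (d : ℕ) := Fin d → ℕ

/-- A Petri net action is a pair of configurations. -/
abbrev PNAction (d : ℕ) := Cfg d × Cfg d

/-- Displacement of an action. -/
def disp {d : ℕ} (a : PNAction d) : Fin d → ℤ :=
  fun i => (a.2 i : ℤ) - (a.1 i : ℤ)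

/-- Infinity norm of an action. -/
def anorm {d : ℕ} (a : PNAction d) : ℕ :=
  Finset.univ.sup fun i => max (a.1 i) (a.2 i)

/-- Infinity norm of a Petri net. -/
def netNorm {d : ℕ} (A : Finset (PNAction d)) : ℕ := A.sup anorm

/-- Step relation of a single action. -/
def Step {d : ℕ} (a : PNAction d) (x y : Cfg d) : Prop :=
  ∃ c : Cfg d, x = a.1 + c ∧ y = a.2 + c

/-- Step relation of a word of actions. -/
def Fires {d : ℕ} : List (PNAction d) → Cfg d → Cfg d → Prop
  | [], x, y => x = y
  | a :: σ, x, y => ∃ z, Step a x z ∧ Fires σ z y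

/-- Displacement of a word of actions. -/
def wdisp {d : ℕ} (σ : List (PNAction d)) : Fin d → ℤ :=
  (σ.map disp).sum

/-- Reachability relation of a Petri net. -/
def Reach {d : ℕ} (A : Finset (PNAction d)) (x y : Cfg d) : Prop :=
  ∃ σ : List (PNAction d), (∀ a ∈ σ, a ∈ A) ∧ Fires σ x y

/-- Mutual reachability. -/
def MutualReach {d : ℕ} (A : Finset (PNAction d)) (x y : Cfg d) : Prop :=
  Reach A x y ∧ Reach A y x

/-- A strongly connected component of configurations: an equivalence class of mutual
reachability. -/
def IsSCCC {d : ℕ} (A : Finset (PNAction d)) (C : Set (Cfg d)) : Prop :=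
  ∃ c₀ : Cfg d, C = {x | MutualReach A c₀ x}

/-- An `I`-configuration. -/
abbrev ICfg (d : ℕ) (I : Finset (Fin d)) := {i : Fin d // i ∈ I} → ℕ

/-- Restriction of a configuration to the components in `I`. -/
def restrictC {d : ℕ} (I : Finset (Fin d)) (c : Cfg d) : ICfg d I := fun i => c i.1

/-- Step relation of an action on `I`-configurations. -/
def IStep {d : ℕ} {I : Finset (Fin d)} (a : PNAction d) (p q : ICfg d I) : Prop :=
  ∃ c : ICfg d I, p = restrictC I a.1 + c ∧ q = restrictC I a.2 + c

/-- A transition of an `I`-unfolding. -/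
abbrev UTrans (d : ℕ) (I : Finset (Fin d)) := ICfg d I × PNAction d × ICfg d I

/-- Path from `p` to `q` in a transition set. -/
def IsPath {d : ℕ} {I : Finset (Fin d)} (T : Finset (UTrans d I)) :
    List (UTrans d I) → ICfg d I → ICfg d I → Prop
  | [], p, q => p = q
  | t :: π, p, q => t ∈ T ∧ t.1 = p ∧ IsPath T π t.2.2 q

/-- Label of a path. -/
def plabel {d : ℕ} {I : Finset (Fin d)} (π : List (UTrans d I)) : List (PNAction d) :=
  π.map fun t => t.2.1

/-- Displacement of a path. -/
def pdisp {d : ℕ} {I : Finset (Fin d)} (π : List (UTrans d I)) : Fin d → ℤ :=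
  wdisp (plabel π)

/-- An `I`-unfolding of a Petri net `A`. -/
structure Unfolding (d : ℕ) (I : Finset (Fin d)) (A : Finset (PNAction d)) where
  Q : Finset (ICfg d I)
  T : Finset (UTrans d I)
  Q_nonempty : Q.Nonempty
  T_mem : ∀ t ∈ T, t.1 ∈ Q ∧ t.2.1 ∈ A ∧ t.2.2 ∈ Q
  T_step : ∀ t ∈ T, IStep t.2.1 t.1 t.2.2
  connected : ∀ p ∈ Q, ∀ q ∈ Q, ∃ π, IsPath T π p q

/-- Structural reversibility. -/
def StructRev {d : ℕ} {I : Finset (Fin d)} {A : Finset (PNAction d)}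
    (G : Unfolding d I A) : Prop :=
  ∀ t ∈ G.T, ∃ π, IsPath G.T π t.2.2 t.1 ∧ wdisp (plabel (t :: π)) = 0

/-- Simple cycle on a state `q`. -/
def SimpleCycle {d : ℕ} {I : Finset (Fin d)} (T : Finset (UTrans d I))
    (π : List (UTrans d I)) (q : ICfg d I) : Prop :=
  IsPath T π q q ∧ π ≠ [] ∧ (π.map fun t => t.2.2).Nodup

/-- The lattice spanned by the displacements of the simple cycles of `G`. -/
def LG {d : ℕ} {I : Finset (Fin d)} {A : Finset (PNAction d)}
    (G : Unfolding d I A) : AddSubgroup (Fin d → ℤ) :=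
  AddSubgroup.closure {v | ∃ q ∈ G.Q, ∃ π, SimpleCycle G.T π q ∧ pdisp π = v}

/-- The coset `Δ(π) + L_G` for paths `π` from `p` to `q`. -/
def LpGq {d : ℕ} {I : Finset (Fin d)} {A : Finset (PNAction d)}
    (G : Unfolding d I A) (p q : ICfg d I) : Set (Fin d → ℤ) :=
  {v | ∃ π, IsPath G.T π p q ∧ v - pdisp π ∈ LG G}

/-- The bound `b := (3dm)^((d+2)^(2d+1))`. -/
def bVal (d m : ℕ) : ℕ := (3 * d * m) ^ ((d + 2) ^ (2 * d + 1))

/-- The threshold `m·r³·(3drm)^d`. -/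
def thrVal (d m r : ℕ) : ℕ := m * r ^ 3 * (3 * d * r * m) ^ d

/-- A pumping pair for `(q, G)`: a pair of words labeling cycles on `q` of length at
most `d·b^d`. -/
def PumpingPair {d : ℕ} {I : Finset (Fin d)} {A : Finset (PNAction d)}
    (G : Unfolding d I A) (q : ICfg d I) (u v : List (PNAction d)) : Prop :=
  (∃ α, IsPath G.T α q q ∧ plabel α = u ∧ α.length ≤ d * (bVal d (netNorm A)) ^ d) ∧
  (∃ β, IsPath G.T β q q ∧ plabel β = v ∧ β.length ≤ d * (bVal d (netNorm A)) ^ d)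

/-- The upward-closed set `U_{q,G}`. -/
def UqG {d : ℕ} {I : Finset (Fin d)} {A : Finset (PNAction d)}
    (G : Unfolding d I A) (q : ICfg d I) : Set (Cfg d) :=
  {c | q ≤ restrictC I c ∧ ∃ u v, PumpingPair G q u v ∧
    ∃ cm cp : Cfg d, Fires u cm c ∧ Fires v c cp ∧
      ∀ i : Fin d, i ∉ I →
        thrVal d (netNorm A) G.Q.card ≤ cm i ∧ thrVal d (netNorm A) G.Q.card ≤ cp i}

/-- A cycle `θ` on `q` is full-state if every state of `G` occurs among the states
it visits. -/
def FullState {d : ℕ} {I : Finset (Fin d)} {A : Finset (PNAction d)}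
    (G : Unfolding d I A) (q : ICfg d I) (θ : List (UTrans d I)) : Prop :=
  ∀ s ∈ G.Q, s ∈ (q :: θ.map fun t => t.2.2)

section Aux

open List

variable {d : ℕ} {I : Finset (Fin d)}

/-- infinity norm of an integer vector -/
def inorm {d : ℕ} (v : Fin d → ℤ) : ℕ := Finset.univ.sup fun i => (v i).natAbs

lemma inorm_le_iff {v : Fin d → ℤ} {K : ℕ} : inorm v ≤ K ↔ ∀ i, (v i).natAbs ≤ K := by
  simp [inorm, Finset.sup_le_iff]

lemma pdisp_nil : pdisp ([] : List (UTrans d I)) = 0 := rfl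

lemma pdisp_cons (t : UTrans d I) (π : List (UTrans d I)) :
    pdisp (t :: π) = disp t.2.1 + pdisp π := rfl

lemma pdisp_append (π₁ π₂ : List (UTrans d I)) :
    pdisp (π₁ ++ π₂) = pdisp π₁ + pdisp π₂ := by
  simp [pdisp, plabel, wdisp]

variable {T : Finset (UTrans d I)}

lemma IsPath.append {π₁ π₂ : List (UTrans d I)} {p z q : ICfg d I}
    (h₁ : IsPath T π₁ p z) (h₂ : IsPath T π₂ z q) : IsPath T (π₁ ++ π₂) p q := by
  induction π₁ generalizing p with
  | nil => cases h₁; simpa using h₂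
  | cons t π ih => exact ⟨h₁.1, h₁.2.1, ih h₁.2.2⟩

lemma isPath_split {π₁ π₂ : List (UTrans d I)} {p q : ICfg d I}
    (h : IsPath T (π₁ ++ π₂) p q) : ∃ z, IsPath T π₁ p z ∧ IsPath T π₂ z q := by
  induction π₁ generalizing p with
  | nil => exact ⟨p, rfl, h⟩
  | cons t π ih =>
    obtain ⟨z, hz₁, hz₂⟩ := ih h.2.2
    exact ⟨z, ⟨h.1, h.2.1, hz₁⟩, hz₂⟩

lemma IsPath.mem_T {π : List (UTrans d I)} {p q : ICfg d I}
    (h : IsPath T π p q) : ∀ t ∈ π, t ∈ T := by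
  induction π generalizing p with
  | nil => simp
  | cons t' π ih =>
    intro t ht
    rcases List.mem_cons.1 ht with rfl | ht
    · exact h.1
    · exact ih h.2.2 t ht

/-- split a path at a visited state -/
lemma isPath_mem_split {π : List (UTrans d I)} {p q s : ICfg d I}
    (h : IsPath T π p q) (hs : s ∈ p :: π.map fun t => t.2.2) :
    ∃ π₁ π₂, π = π₁ ++ π₂ ∧ IsPath T π₁ p s ∧ IsPath T π₂ s q := by
  induction π generalizing p with
  | nil =>
    simp only [map_nil, mem_singleton] at hs
    exact ⟨[], [], rfl, hs ▸ rfl, hs ▸ h⟩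
  | cons t π ih =>
    rcases List.mem_cons.1 hs with rfl | hs'
    · exact ⟨[], t :: π, rfl, rfl, h⟩
    · obtain ⟨π₁, π₂, hsplit, h₁, h₂⟩ := ih h.2.2 hs'
      exact ⟨t :: π₁, π₂, by rw [hsplit]; rfl, ⟨h.1, h.2.1, h₁⟩, h₂⟩

/-- split a path at a strictly-visited state, with nonempty first part -/
lemma isPath_mem_split' {π : List (UTrans d I)} {p q s : ICfg d I}
    (h : IsPath T π p q) (hs : s ∈ π.map fun t => t.2.2) :
    ∃ π₁ π₂, π = π₁ ++ π₂ ∧ π₁ ≠ [] ∧ IsPath T π₁ p s ∧ IsPath T π₂ s q := by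
  induction π generalizing p with
  | nil => simp at hs
  | cons t π ih =>
    rcases List.mem_cons.1 hs with hs' | hs'
    · exact ⟨[t], π, rfl, by simp, ⟨h.1, h.2.1, hs' ▸ rfl⟩, hs' ▸ h.2.2⟩
    · obtain ⟨π₁, π₂, hsplit, _, h₁, h₂⟩ := ih h.2.2 hs'
      exact ⟨t :: π₁, π₂, by rw [hsplit]; rfl, by simp, ⟨h.1, h.2.1, h₁⟩, h₂⟩

end Aux
section PartB

open List

variable {d : ℕ} {I : Finset (Fin d)} {A : Finset (PNAction d)}

/-- a "simple cycle" (at an unspecified base) -/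
def SCyc (T : Finset (UTrans d I)) (c : List (UTrans d I)) : Prop :=
  (∃ s, IsPath T c s s) ∧ c ≠ [] ∧ (c.map fun t => t.2.2).Nodup

lemma disp_natAbs_le {a : PNAction d} (ha : a ∈ A) (i : Fin d) :
    (disp a i).natAbs ≤ netNorm A := by
  have h1 : a.1 i ≤ anorm a := by
    refine le_trans ?_ (Finset.le_sup (f := fun i => max (a.1 i) (a.2 i)) (Finset.mem_univ i))
    exact le_max_left _ _
  have h2 : a.2 i ≤ anorm a := by
    refine le_trans ?_ (Finset.le_sup (f := fun i => max (a.1 i) (a.2 i)) (Finset.mem_univ i))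
    exact le_max_right _ _
  have hA : anorm a ≤ netNorm A := Finset.le_sup ha
  have : (disp a i).natAbs ≤ anorm a := by
    rw [disp]
    omega
  omega

variable (G : Unfolding d I A)

lemma pdisp_natAbs_le {π : List (UTrans d I)} {p q : ICfg d I}
    (h : IsPath G.T π p q) (i : Fin d) :
    (pdisp π i).natAbs ≤ π.length * netNorm A := by
  induction π generalizing p with
  | nil => simp [pdisp_nil]
  | cons t π ih =>
    have h1 := disp_natAbs_le (G.T_mem t h.1).2.1 i
    have h2 := ih h.2.2
    have h3 : (pdisp (t :: π) i).natAbs ≤ (disp t.2.1 i).natAbs + (pdisp π i).natAbs := by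
      rw [pdisp_cons]; exact Int.natAbs_add_le _ _
    simp only [List.length_cons]
    calc (pdisp (t :: π) i).natAbs ≤ (disp t.2.1 i).natAbs + (pdisp π i).natAbs := h3
    _ ≤ netNorm A + π.length * netNorm A := by omega
    _ = (π.length + 1) * netNorm A := by ring

lemma IsPath.states_mem {π : List (UTrans d I)} {p q : ICfg d I}
    (h : IsPath G.T π p q) : ∀ s ∈ π.map (fun t => t.2.2), s ∈ G.Q := by
  intro s hs
  obtain ⟨t, ht, rfl⟩ := List.mem_map.1 hs
  exact (G.T_mem t (h.mem_T t ht)).2.2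

lemma nodup_length_le {l : List (ICfg d I)} (hn : l.Nodup) (hQ : ∀ s ∈ l, s ∈ G.Q) :
    l.length ≤ G.Q.card := by
  classical
  rw [← List.toFinset_card_of_nodup hn]
  exact Finset.card_le_card (fun s hs => hQ s (List.mem_toFinset.1 hs))

/-- a path with nodup states including start has length < r -/
lemma nodup_path_length {π : List (UTrans d I)} {p q : ICfg d I}
    (h : IsPath G.T π p q) (hp : p ∈ G.Q)
    (hn : (p :: π.map (fun t => t.2.2)).Nodup) : π.length + 1 ≤ G.Q.card := by
  have := nodup_length_le G (l := p :: π.map (fun t => t.2.2)) hn ?_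
  · simpa using this
  · intro s hs
    rcases List.mem_cons.1 hs with rfl | hs
    · exact hp
    · exact h.states_mem G s hs

/-- a simple cycle has length ≤ r -/
lemma scyc_length_le {c : List (UTrans d I)} (hc : SCyc G.T c) : c.length ≤ G.Q.card := by
  obtain ⟨⟨s, hpath⟩, hne, hnd⟩ := hc
  have := nodup_length_le G hnd (hpath.states_mem G)
  simpa using this

lemma scyc_pdisp_le {c : List (UTrans d I)} (hc : SCyc G.T c) (i : Fin d) :
    (pdisp c i).natAbs ≤ G.Q.card * netNorm A := by
  obtain ⟨s, hpath⟩ := hc.1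
  calc (pdisp c i).natAbs ≤ c.length * netNorm A := pdisp_natAbs_le G hpath i
  _ ≤ G.Q.card * netNorm A := Nat.mul_le_mul_right _ (scyc_length_le G hc)

variable {T : Finset (UTrans d I)}

lemma path_dup_split {π : List (UTrans d I)} {p q : ICfg d I} :
    IsPath T π p q → ¬(p :: π.map (fun t => t.2.2)).Nodup →
    ∃ π₁ π₂ π₃ s, π = π₁ ++ π₂ ++ π₃ ∧ π₂ ≠ [] ∧
      IsPath T π₁ p s ∧ IsPath T π₂ s s ∧ IsPath T π₃ s q := by
  induction π generalizing p with
  | nil => intro _ hnd; simp at hnd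
  | cons t π ih =>
    intro h hnd
    by_cases hp : p ∈ (t :: π).map (fun t => t.2.2)
    · obtain ⟨π₁, π₂, hsplit, hne, h₁, h₂⟩ := isPath_mem_split' h hp
      exact ⟨[], π₁, π₂, p, by simpa using hsplit, hne, rfl, h₁, h₂⟩
    · have hnd' : ¬(t.2.2 :: π.map (fun t => t.2.2)).Nodup := by
        intro hcon
        exact hnd (List.nodup_cons.2 ⟨hp, by simpa using hcon⟩)
      obtain ⟨π₁, π₂, π₃, s, hsplit, hne, h₁, h₂, h₃⟩ := ih h.2.2 hnd'
      exact ⟨t :: π₁, π₂, π₃, s, by rw [hsplit]; rfl, hne, ⟨h.1, h.2.1, h₁⟩, h₂, h₃⟩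

lemma decompCycle : ∀ (n : ℕ) (σ : List (UTrans d I)) (s : ICfg d I), σ.length ≤ n →
    IsPath T σ s s → σ ≠ [] →
    ∃ C : List (List (UTrans d I)),
      (∀ c ∈ C, SCyc T c) ∧ (C.map pdisp).sum = pdisp σ := by
  intro n
  induction n with
  | zero => intro σ s hl _ hne; interval_cases h : σ.length <;> simp_all
  | succ n ih =>
    intro σ s hl h hne
    by_cases hnd : (σ.map (fun t => t.2.2)).Nodup
    · exact ⟨[σ], by intro c hc; simp at hc; subst hc; exact ⟨⟨s, h⟩, hne, hnd⟩, by simp⟩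
    · obtain ⟨t, π, rfl⟩ : ∃ t π, σ = t :: π := by
        cases σ with
        | nil => exact absurd rfl hne
        | cons t π => exact ⟨t, π, rfl⟩
      have hnd' : ¬(t.2.2 :: π.map (fun t => t.2.2)).Nodup := by simpa using hnd
      obtain ⟨π₁, π₂, π₃, s', hsplit, hne₂, h₁, h₂, h₃⟩ := path_dup_split h.2.2 hnd'
      have hlen : (t :: π).length = 1 + π₁.length + π₂.length + π₃.length := by
        simp [hsplit]; omega
      have hπ₂ : π₂.length ≥ 1 := by
        cases π₂ with
        | nil => exact absurd rfl hne₂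
        | cons _ _ => simp
      obtain ⟨C₁, hC₁, hS₁⟩ := ih (t :: (π₁ ++ π₃)) s (by simp; omega)
        ⟨h.1, h.2.1, h₁.append h₃⟩ (by simp)
      obtain ⟨C₂, hC₂, hS₂⟩ := ih π₂ s' (by omega) h₂ hne₂
      refine ⟨C₁ ++ C₂, ?_, ?_⟩
      · intro c hc
        rcases List.mem_append.1 hc with hc | hc
        · exact hC₁ c hc
        · exact hC₂ c hc
      · rw [List.map_append, List.sum_append, hS₁, hS₂, hsplit]
        simp only [pdisp_cons, pdisp_append]
        abel

lemma decompPath : ∀ (n : ℕ) (π : List (UTrans d I)) (p q : ICfg d I), π.length ≤ n →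
    IsPath T π p q →
    ∃ (ρ : List (UTrans d I)) (C : List (List (UTrans d I))), IsPath T ρ p q ∧ (p :: ρ.map (fun t => t.2.2)).Nodup ∧
      (∀ c ∈ C, SCyc T c) ∧ pdisp ρ + (C.map pdisp).sum = pdisp π := by
  intro n
  induction n with
  | zero =>
    intro π p q hl h
    have : π = [] := by cases π <;> simp_all
    subst this
    exact ⟨[], [], h, by simp, by simp, by simp⟩
  | succ n ih =>
    intro π p q hl h
    by_cases hnd : (p :: π.map (fun t => t.2.2)).Nodup
    · exact ⟨π, [], h, hnd, by simp, by simp⟩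
    · obtain ⟨π₁, π₂, π₃, s, hsplit, hne₂, h₁, h₂, h₃⟩ := path_dup_split h hnd
      have hπ₂ : π₂.length ≥ 1 := by
        cases π₂ with
        | nil => exact absurd rfl hne₂
        | cons _ _ => simp
      have hlen : π.length = π₁.length + π₂.length + π₃.length := by simp [hsplit]; omega
      obtain ⟨ρ, C₁, hρ, hρnd, hC₁, hS₁⟩ := ih (π₁ ++ π₃) p q (by simp; omega) (h₁.append h₃)
      obtain ⟨C₂, hC₂, hS₂⟩ := decompCycle π₂.length π₂ s le_rfl h₂ hne₂
      refine ⟨ρ, C₁ ++ C₂, hρ, hρnd, ?_, ?_⟩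
      · intro c hc
        rcases List.mem_append.1 hc with hc | hc
        · exact hC₁ c hc
        · exact hC₂ c hc
      · rw [List.map_append, List.sum_append, hsplit]
        simp only [pdisp_append] at hS₁ ⊢
        rw [← add_assoc, hS₁, hS₂]
        abel

end PartB
section Vertex

variable {d : ℕ}

/-- Membership in the polytope used in the Steinitz argument. -/
def InP {ι : Type} [Fintype ι] (v : ι → Fin d → ℚ) (s' : ℚ) (lam : ι → ℚ) : Prop :=
  (∀ i, 0 ≤ lam i ∧ lam i ≤ 1) ∧ (∑ i, lam i) = s' ∧
    ∀ j : Fin d, ∑ i, lam i * v i j = 0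

/-- In a nonempty "slice" polytope with `s' ≤ card − (d+1)` there is a point
with a zero coordinate. -/
lemma exists_zero_coord {ι : Type} [Fintype ι] [DecidableEq ι]
    (v : ι → Fin d → ℚ) (s' : ℚ)
    (hsub : s' ≤ (Fintype.card ι : ℚ) - (d + 1))
    (lam0 : ι → ℚ) (h0 : InP v s' lam0) :
    ∃ lam, InP v s' lam ∧ ∃ i₀, lam i₀ = 0 := by
  classical
  set fc : (ι → ℚ) → ℕ := fun lam => (Finset.univ.filter fun i => lam i ≠ 0 ∧ lam i ≠ 1).card
    with hfc
  have hex : ∃ c : ℕ, ∃ lam, InP v s' lam ∧ fc lam = c := ⟨fc lam0, lam0, h0, rfl⟩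
  obtain ⟨lam, hlam, hmin⟩ : ∃ lam, InP v s' lam ∧ ∀ lam', InP v s' lam' → fc lam ≤ fc lam' := by
    obtain ⟨lam, hlam, hN⟩ := Nat.find_spec hex
    exact ⟨lam, hlam, fun lam' h' => by rw [hN]; exact Nat.find_min' hex ⟨lam', h', rfl⟩⟩
  refine ⟨lam, hlam, ?_⟩
  set F : Finset ι := Finset.univ.filter fun i => lam i ≠ 0 ∧ lam i ≠ 1 with hF
  -- step 1 : the minimal point has at most d+1 fractional coordinates
  have hfrac : F.card ≤ d + 1 := by
    by_contra hcon
    push_neg at hcon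
    have hrank : ¬ LinearIndependent ℚ
        (fun i : {i // i ∈ F} => ((v i.1, 1) : (Fin d → ℚ) × ℚ)) := by
      intro hli
      have hc := hli.fintype_card_le_finrank
      rw [Fintype.card_coe] at hc
      have hfr : Module.finrank ℚ ((Fin d → ℚ) × ℚ) = d + 1 := by
        rw [Module.finrank_prod, Module.finrank_fintype_fun_eq_card, Module.finrank_self]
        simp
      omega
    obtain ⟨gg, hgg, i₁, hi₁⟩ := Fintype.not_linearIndependent_iff.1 hrank
    set μ : ι → ℚ := fun i => if h : i ∈ F then gg ⟨i, h⟩ else 0 with hμ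
    have hμ0 : ∀ i, i ∉ F → μ i = 0 := fun i h => dif_neg h
    have hμfrac : ∀ i, μ i ≠ 0 → (0 < lam i ∧ lam i < 1) := by
      intro i hi
      by_cases h : i ∈ F
      · have hmem := (Finset.mem_filter.1 h).2
        have hb := hlam.1 i
        constructor
        · rcases lt_or_eq_of_le hb.1 with h' | h'
          · exact h'
          · exact absurd h'.symm hmem.1
        · rcases lt_or_eq_of_le hb.2 with h' | h'
          · exact h'
          · exact absurd h' hmem.2
      · exact absurd (hμ0 i h) hi
    have hsum_transfer : ∀ f : ι → ℚ, ∑ i, μ i * f i = ∑ x : {i // i ∈ F}, gg x * f x.1 := by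
      intro f
      rw [← Finset.sum_subset (Finset.subset_univ F)
        (fun i _ hi => by rw [hμ0 i hi, zero_mul])]
      rw [← Finset.sum_attach F (fun i => μ i * f i)]
      rw [Finset.univ_eq_attach]
      refine Finset.sum_congr rfl fun x _ => ?_
      have : μ x.1 = gg x := by
        simp [hμ, x.2]
      rw [this]
    -- components of the relation
    have hggv : ∀ j : Fin d, ∑ x : {i // i ∈ F}, gg x * v x.1 j = 0 := by
      intro j
      have h1 := congrArg Prod.fst hgg
      have h2 := congrArg (fun z : (Fin d → ℚ) => z j) (by simpa [Prod.fst_sum] using h1)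
      simpa [Finset.sum_apply, smul_eq_mul] using h2
    have hggs : ∑ x : {i // i ∈ F}, gg x = 0 := by
      have h1 := congrArg Prod.snd hgg
      simpa [Prod.snd_sum, smul_eq_mul] using h1
    have hμsum : ∑ i, μ i = 0 := by
      have := hsum_transfer (fun _ => 1)
      simpa using this.trans (by simpa using hggs)
    have hμv : ∀ j : Fin d, ∑ i, μ i * v i j = 0 := by
      intro j
      exact (hsum_transfer (fun i => v i j)).trans (hggv j)
    have hμne : μ i₁.1 ≠ 0 := by
      have : μ i₁.1 = gg i₁ := by
        simp [hμ, i₁.2]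
      rw [this]; exact hi₁
    -- the move
    set cand : ι → ℚ := fun i => if 0 < μ i then (1 - lam i) / μ i else lam i / (-μ i)
      with hcand
    set cset : Finset ℚ := (Finset.univ.filter fun i => μ i ≠ 0).image cand with hcset
    have hcs_ne : cset.Nonempty :=
      ⟨cand i₁.1, Finset.mem_image.2 ⟨i₁.1, Finset.mem_filter.2 ⟨Finset.mem_univ _, hμne⟩, rfl⟩⟩
    set t₀ : ℚ := cset.min' hcs_ne with ht₀
    have hcand_pos : ∀ i, μ i ≠ 0 → 0 < cand i := by
      intro i hi
      obtain ⟨hl0, hl1⟩ := hμfrac i hi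
      by_cases hp : 0 < μ i
      · simp only [hcand, if_pos hp]
        exact div_pos (by linarith) hp
      · simp only [hcand, if_neg hp]
        have : μ i < 0 := lt_of_le_of_ne (le_of_not_gt hp) hi
        exact div_pos hl0 (by linarith)
    have ht₀_pos : 0 < t₀ := by
      obtain ⟨i, hi, heq⟩ := Finset.mem_image.1 (cset.min'_mem hcs_ne)
      rw [ht₀, ← heq]
      exact hcand_pos i (Finset.mem_filter.1 hi).2
    have ht₀_le : ∀ i, μ i ≠ 0 → t₀ ≤ cand i := by
      intro i hi
      exact cset.min'_le _ (Finset.mem_image.2 ⟨i, Finset.mem_filter.2 ⟨Finset.mem_univ _, hi⟩, rfl⟩)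
    set lam' : ι → ℚ := fun i => lam i + t₀ * μ i with hlam'
    have hbounds : ∀ i, 0 ≤ lam' i ∧ lam' i ≤ 1 := by
      intro i
      by_cases hi : μ i = 0
      · simp [hlam', hi]; exact hlam.1 i
      · obtain ⟨hl0, hl1⟩ := hμfrac i hi
        by_cases hp : 0 < μ i
        · have h1 : t₀ * μ i ≤ ((1 - lam i) / μ i) * μ i :=
            mul_le_mul_of_nonneg_right (by simpa [hcand, if_pos hp] using ht₀_le i hi) (le_of_lt hp)
          rw [div_mul_cancel₀ _ hi] at h1
          constructor
          · have : 0 < t₀ * μ i := mul_pos ht₀_pos hp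
            simp only [hlam']; linarith
          · simp only [hlam']; linarith
        · have hn : μ i < 0 := lt_of_le_of_ne (le_of_not_gt hp) hi
          have h1 : (lam i / (-μ i)) * μ i ≤ t₀ * μ i :=
            mul_le_mul_of_nonpos_right (by simpa [hcand, if_neg hp] using ht₀_le i hi) (le_of_lt hn)
          have h2 : (lam i / (-μ i)) * μ i = - lam i := by
            rw [div_mul_eq_mul_div, div_eq_iff (neg_ne_zero.2 hi)]; ring
          rw [h2] at h1
          constructor
          · simp only [hlam']; linarith
          · have : t₀ * μ i < 0 := mul_neg_of_pos_of_neg ht₀_pos hn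
            simp only [hlam']; linarith
    have hInP' : InP v s' lam' := by
      refine ⟨hbounds, ?_, ?_⟩
      · simp only [hlam']
        rw [Finset.sum_add_distrib, ← Finset.mul_sum, hμsum, mul_zero, add_zero]
        exact hlam.2.1
      · intro j
        simp only [hlam']
        have : ∀ i, (lam i + t₀ * μ i) * v i j = lam i * v i j + t₀ * (μ i * v i j) := by
          intro i; ring
        simp only [this]
        rw [Finset.sum_add_distrib, ← Finset.mul_sum, hμv j, mul_zero, add_zero]
        exact hlam.2.2 j
    -- i* leaves the fractional set
    obtain ⟨istar, histar, hcand_eq⟩ := Finset.mem_image.1 (cset.min'_mem hcs_ne)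
    have hμstar : μ istar ≠ 0 := (Finset.mem_filter.1 histar).2
    have histar_int : lam' istar = 1 ∨ lam' istar = 0 := by
      by_cases hp : 0 < μ istar
      · left
        have heq : t₀ = (1 - lam istar) / μ istar := by
          rw [ht₀, ← hcand_eq]
          simp only [hcand]
          rw [if_pos hp]
        have h2 : ((1 - lam istar) / μ istar) * μ istar = 1 - lam istar :=
          div_mul_cancel₀ _ hμstar
        simp only [hlam', heq]
        rw [h2]; ring
      · right
        have heq : t₀ = lam istar / (-μ istar) := by
          rw [ht₀, ← hcand_eq]
          simp only [hcand]
          rw [if_neg hp]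
        have h2 : (lam istar / (-μ istar)) * μ istar = - lam istar := by
          rw [div_mul_eq_mul_div, div_eq_iff (neg_ne_zero.2 hμstar)]; ring
        simp only [hlam', heq]
        rw [h2]; ring
    have histarF : istar ∈ F := by
      by_contra h
      exact hμstar (hμ0 istar h)
    have hsubF : (Finset.univ.filter fun i => lam' i ≠ 0 ∧ lam' i ≠ 1) ⊆ F.erase istar := by
      intro i hi
      have hi' := (Finset.mem_filter.1 hi).2
      refine Finset.mem_erase.2 ⟨?_, ?_⟩
      · rintro rfl
        rcases histar_int with h | h
        · exact hi'.2 h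
        · exact hi'.1 h
      · by_cases hm : μ i = 0
        · have : lam' i = lam i := by simp [hlam', hm]
          rw [this] at hi'
          exact Finset.mem_filter.2 ⟨Finset.mem_univ _, hi'⟩
        · obtain ⟨h1, h2⟩ := hμfrac i hm
          exact Finset.mem_filter.2 ⟨Finset.mem_univ _, ne_of_gt h1, ne_of_lt h2⟩
    have hlt : fc lam' < fc lam := by
      have h1 : (Finset.univ.filter fun i => lam' i ≠ 0 ∧ lam' i ≠ 1).card ≤ (F.erase istar).card :=
        Finset.card_le_card hsubF
      have h2 : (F.erase istar).card < F.card := Finset.card_erase_lt_of_mem histarF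
      have e1 : fc lam = F.card := rfl
      have e2 : fc lam' = (Finset.univ.filter fun i => lam' i ≠ 0 ∧ lam' i ≠ 1).card := rfl
      omega
    exact absurd (hmin lam' hInP') (by omega)
  -- step 2 : a zero coordinate exists
  by_contra hno
  push_neg at hno
  set O : Finset ι := Finset.univ.filter fun i => lam i = 1 with hO
  have hdiff_sub : Finset.univ \ O ⊆ F := by
    intro i hi
    have h1 : lam i ≠ 1 := by
      have := (Finset.mem_sdiff.1 hi).2
      simpa [hO] using this
    exact Finset.mem_filter.2 ⟨Finset.mem_univ _, hno i, h1⟩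
  have hsplit : ∑ i, lam i = ∑ i ∈ O, lam i + ∑ i ∈ Finset.univ \ O, lam i := by
    rw [← Finset.sum_union (Finset.disjoint_sdiff)]
    congr 1
    rw [Finset.union_sdiff_of_subset (Finset.subset_univ O)]
  have hOsum : ∑ i ∈ O, lam i = O.card := by
    rw [Finset.sum_congr rfl (fun i hi => (Finset.mem_filter.1 hi).2)]
    simp [hO]
  have hcards : O.card + (Finset.univ \ O).card = Fintype.card ι := by
    rw [Finset.card_sdiff_of_subset (Finset.subset_univ O), Finset.card_univ]
    have := Finset.card_le_card (Finset.subset_univ O)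
    rw [Finset.card_univ] at this
    omega
  have hdcard : (Finset.univ \ O).card ≤ d + 1 :=
    le_trans (Finset.card_le_card hdiff_sub) hfrac
  -- each term in the sdiff sum is positive
  have hpos : ∀ i ∈ Finset.univ \ O, 0 < lam i := by
    intro i _
    exact lt_of_le_of_ne (hlam.1 i).1 (Ne.symm (hno i))
  have hsdiff_le : ∑ i ∈ Finset.univ \ O, lam i ≤ 0 := by
    have h1 : s' ≤ (O.card : ℚ) := by
      have : ((Fintype.card ι : ℚ)) - (d+1) ≤ (O.card : ℚ) := by
        have := hcards
        have h2 : ((Finset.univ \ O).card : ℚ) ≤ (d : ℚ) + 1 := by exact_mod_cast hdcard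
        have h3 : (O.card : ℚ) + ((Finset.univ \ O).card : ℚ) = (Fintype.card ι : ℚ) := by
          exact_mod_cast this
        linarith
      linarith
    have h2 : ∑ i, lam i = s' := hlam.2.1
    rw [hsplit, hOsum] at h2
    linarith
  have hempty : Finset.univ \ O = ∅ := by
    by_contra hne
    have : 0 < ∑ i ∈ Finset.univ \ O, lam i :=
      Finset.sum_pos hpos (Finset.nonempty_of_ne_empty hne)
    linarith
  have hOuniv : O = Finset.univ := by
    have := Finset.sdiff_eq_empty_iff_subset.1 hempty
    exact le_antisymm (Finset.subset_univ O) this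
  have hfull : ∑ i, lam i = (Fintype.card ι : ℚ) := by
    rw [hsplit, hempty, hOsum, hOuniv]
    simp [Finset.card_univ]
  rw [hlam.2.1] at hfull
  have : (0:ℚ) < (d:ℚ) + 1 := by positivity
  linarith [hsub, hfull.symm ▸ hsub]

end Vertex
section Steinitz

variable {d : ℕ}

lemma ratAbs_le {x : ℤ} {K : ℕ} (h : x.natAbs ≤ K) : |(x : ℚ)| ≤ (K : ℚ) := by
  rw [← Int.cast_abs]
  have h2 : |x| ≤ (K : ℤ) := by rw [Int.abs_eq_natAbs]; exact_mod_cast h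
  exact_mod_cast h2

lemma inorm_add_le (v w : Fin d → ℤ) : inorm (v + w) ≤ inorm v + inorm w := by
  rw [inorm_le_iff]
  intro i
  have h1 : (v i).natAbs ≤ inorm v := inorm_le_iff.1 le_rfl i
  have h2 : (w i).natAbs ≤ inorm w := inorm_le_iff.1 le_rfl i
  have := Int.natAbs_add_le (v i) (w i)
  simp only [Pi.add_apply]
  omega

lemma inorm_sum_le (L : List (Fin d → ℤ)) (K : ℕ) (h : ∀ v ∈ L, inorm v ≤ K) :
    inorm L.sum ≤ L.length * K := by
  induction L with
  | nil => simp [inorm]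
  | cons v L ih =>
    have h1 := inorm_add_le v L.sum
    have h2 := ih (fun w hw => h w (List.mem_cons_of_mem _ hw))
    have h3 := h v (List.mem_cons_self)
    simp only [List.sum_cons, List.length_cons]
    calc inorm (v + L.sum) ≤ inorm v + inorm L.sum := h1
    _ ≤ K + L.length * K := by omega
    _ = (L.length + 1) * K := by ring

lemma perm_ofFn_succAbove {α : Type} : ∀ (m : ℕ) (v : Fin (m+1) → α) (p : Fin (m+1)),
    (v p :: List.ofFn (v ∘ p.succAbove)).Perm (List.ofFn v) := by
  intro m
  induction m with
  | zero =>
    intro v p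
    have hp : p = 0 := Fin.ext (by omega)
    subst hp
    simp [List.ofFn_succ]
  | succ m ih =>
    intro v p
    rcases Fin.eq_zero_or_eq_succ p with rfl | ⟨q, rfl⟩
    · have heq : v ∘ Fin.succAbove 0 = fun i => v i.succ := by
        funext i
        simp [Fin.succAbove]
      rw [heq, ← List.ofFn_succ]
    · rw [List.ofFn_succ (f := v)]
      have h0 : (v ∘ q.succ.succAbove) 0 = v 0 := by
        simp [Function.comp]
      rw [List.ofFn_succ (f := v ∘ q.succ.succAbove), h0]
      have h1 : (fun i : Fin m => (v ∘ q.succ.succAbove) i.succ) =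
          ((fun i => v i.succ) ∘ q.succAbove) := by
        funext i
        simp [Function.comp, Fin.succ_succAbove_succ]
      rw [h1]
      refine List.Perm.trans (List.Perm.swap (v 0) (v q.succ) _) ?_
      exact (ih (fun i => v i.succ) q).cons (v 0)

lemma sum_inorm_bound {α : Type} (g : α → Fin d → ℤ) (K : ℕ) {n : ℕ} (v : Fin n → α)
    (hb : ∀ i, inorm (g (v i)) ≤ K)
    (lam : Fin n → ℚ) (hl : ∀ i, 0 ≤ lam i ∧ lam i ≤ 1)
    (hs : (∑ i, lam i) = (n : ℚ) - d)
    (hv : ∀ j : Fin d, ∑ i, lam i * ((g (v i)) j : ℚ) = 0) :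
    inorm (((List.ofFn v).map g).sum) ≤ d * K := by
  rw [inorm_le_iff]
  intro j
  have hS : (((List.ofFn v).map g).sum) j = ∑ i, g (v i) j := by
    rw [List.map_ofFn, List.sum_ofFn, Finset.sum_apply]
    rfl
  rw [hS]
  have hq : ((∑ i, g (v i) j : ℤ) : ℚ) = ∑ i, ((g (v i) j : ℤ) : ℚ) := by
    push_cast
    rfl
  have hrw : ((∑ i, g (v i) j : ℤ) : ℚ) = ∑ i, (1 - lam i) * (g (v i) j : ℚ) := by
    rw [hq]
    have hterm : ∀ i : Fin n, (1 - lam i) * (g (v i) j : ℚ) =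
        (g (v i) j : ℚ) - lam i * (g (v i) j : ℚ) := by intro i; ring
    simp only [hterm]
    rw [Finset.sum_sub_distrib, hv j, sub_zero]
  have habs : |((∑ i, g (v i) j : ℤ) : ℚ)| ≤ (d : ℚ) * K := by
    rw [hrw]
    calc |∑ i, (1 - lam i) * (g (v i) j : ℚ)| ≤ ∑ i, |(1 - lam i) * (g (v i) j : ℚ)| :=
      Finset.abs_sum_le_sum_abs _ _
    _ ≤ ∑ i, (1 - lam i) * K := by
        refine Finset.sum_le_sum fun i _ => ?_
        rw [abs_mul, abs_of_nonneg (by linarith [(hl i).2])]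
        refine mul_le_mul_of_nonneg_left ?_ (by linarith [(hl i).2])
        exact ratAbs_le (inorm_le_iff.1 (hb i) j)
    _ = (∑ i, (1 - lam i)) * K := by rw [← Finset.sum_mul]
    _ = (d : ℚ) * K := by
        rw [Finset.sum_sub_distrib, hs, Finset.sum_const, Finset.card_univ, Fintype.card_fin,
          nsmul_eq_mul, mul_one]
        ring
  have h1 : |(∑ i, g (v i) j : ℤ)| ≤ (d * K : ℤ) := by
    have hcast : ((d : ℚ) * K) = ((d * K : ℤ) : ℚ) := by push_cast; ring
    rw [hcast, ← Int.cast_abs] at habs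
    exact_mod_cast habs
  have := abs_le.1 h1
  omega

lemma steinitz_aux {α : Type} (g : α → Fin d → ℤ) (K : ℕ) :
    ∀ (n : ℕ) (v : Fin n → α), (∀ i, inorm (g (v i)) ≤ K) →
    (∃ lam : Fin n → ℚ, (∀ i, 0 ≤ lam i ∧ lam i ≤ 1) ∧
      (∑ i, lam i) = (n : ℚ) - d ∧
      ∀ j : Fin d, ∑ i, lam i * ((g (v i)) j : ℚ) = 0) →
    ∃ l' : List α, l'.Perm (List.ofFn v) ∧ ∀ k, inorm (((l'.take k).map g).sum) ≤ d * K := by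
  intro n
  induction n using Nat.strong_induction_on with
  | _ n ih =>
    intro v hb hlam
    by_cases hn : n ≤ d
    · refine ⟨List.ofFn v, List.Perm.refl _, fun k => ?_⟩
      have hmem : ∀ w ∈ ((List.ofFn v).take k).map g, inorm w ≤ K := by
        intro w hw
        obtain ⟨a, ha, rfl⟩ := List.mem_map.1 hw
        have ha' : a ∈ List.ofFn v := List.mem_of_mem_take ha
        obtain ⟨i, rfl⟩ := List.mem_ofFn.1 ha'
        exact hb i
      have hlen : (((List.ofFn v).take k).map g).length ≤ n := by
        simp only [List.length_map, List.length_take, List.length_ofFn]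
        omega
      calc inorm ((((List.ofFn v).take k)).map g).sum
          ≤ ((((List.ofFn v).take k)).map g).length * K := inorm_sum_le _ K hmem
        _ ≤ d * K := Nat.mul_le_mul_right _ (le_trans hlen hn)
    · push_neg at hn
      obtain ⟨m, rfl⟩ := Nat.exists_eq_succ_of_ne_zero (by omega : n ≠ 0)
      obtain ⟨lam, hl01, hlsum, hlvec⟩ := hlam
      have hden : ((m:ℚ) + 1 - d) > 0 := by
        have : (d:ℚ) < (m:ℚ) + 1 := by exact_mod_cast hn
        linarith
      have hden' : ((m:ℚ) + 1 - d) ≠ 0 := ne_of_gt hden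
      set c : ℚ := ((m : ℚ) - d) / ((m : ℚ) + 1 - d) with hc
      have hc0 : 0 ≤ c := by
        apply div_nonneg _ (le_of_lt hden)
        have : (d:ℚ) + 1 ≤ (m:ℚ) + 1 := by exact_mod_cast hn
        linarith
      have hc1 : c ≤ 1 := by
        rw [hc, div_le_one hden]
        linarith
      have hInP0 : InP (fun i j => ((g (v i)) j : ℚ)) ((m : ℚ) - d) (fun i => lam i * c) := by
        refine ⟨fun i => ⟨mul_nonneg (hl01 i).1 hc0, ?_⟩, ?_, ?_⟩
        · calc lam i * c ≤ 1 * 1 :=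
            mul_le_mul (hl01 i).2 hc1 hc0 zero_le_one
          _ = 1 := by ring
        · rw [← Finset.sum_mul, hlsum, hc]
          push_cast
          rw [← mul_div_assoc, div_eq_iff hden']
          ring
        · intro j
          have hterm : ∀ i : Fin (m+1), lam i * c * ((g (v i)) j : ℚ) =
              c * (lam i * ((g (v i)) j : ℚ)) := by intro i; ring
          simp only [hterm]
          rw [← Finset.mul_sum, hlvec j, mul_zero]
      have hsub : ((m : ℚ) - d) ≤ (Fintype.card (Fin (m+1)) : ℚ) - (d + 1) := by
        rw [Fintype.card_fin]
        push_cast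
        linarith
      obtain ⟨lam1, hlam1, p, hp0⟩ := exists_zero_coord (fun i j => ((g (v i)) j : ℚ))
        ((m : ℚ) - d) hsub _ hInP0
      -- data for the recursive call
      have hlamrest : ∃ lam' : Fin m → ℚ, (∀ i, 0 ≤ lam' i ∧ lam' i ≤ 1) ∧
          (∑ i, lam' i) = (m : ℚ) - d ∧
          ∀ j : Fin d, ∑ i, lam' i * ((g ((v ∘ p.succAbove) i)) j : ℚ) = 0 := by
        refine ⟨lam1 ∘ p.succAbove, fun i => hlam1.1 _, ?_, ?_⟩
        · have hsa := Fin.sum_univ_succAbove lam1 p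
          rw [hlam1.2.1, hp0] at hsa
          have h2 : ∑ i : Fin m, lam1 (p.succAbove i) = (m:ℚ) - d := by linarith
          simpa using h2
        · intro j
          have hsa := Fin.sum_univ_succAbove (fun i => lam1 i * ((g (v i)) j : ℚ)) p
          rw [hlam1.2.2 j, hp0, zero_mul, zero_add] at hsa
          exact hsa.symm
      obtain ⟨l'', hperm'', hpre''⟩ := ih m (by omega) (v ∘ p.succAbove)
        (fun i => hb _) hlamrest
      have hperm : (l'' ++ [v p]).Perm (List.ofFn v) := by
        refine List.Perm.trans (List.perm_append_singleton _ _) ?_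
        refine List.Perm.trans (hperm''.cons (v p)) ?_
        exact perm_ofFn_succAbove m v p
      refine ⟨l'' ++ [v p], hperm, ?_⟩
      intro k
      have hlen'' : l''.length = m := by
        have := hperm''.length_eq
        simpa using this
      by_cases hk : k ≤ l''.length
      · rw [List.take_append_of_le_length hk]
        exact hpre'' k
      · have hfull : (l'' ++ [v p]).take k = l'' ++ [v p] := by
          apply List.take_of_length_le
          simp only [List.length_append, List.length_singleton]
          omega
        rw [hfull]
        have hsum_eq : ((l'' ++ [v p]).map g).sum = ((List.ofFn v).map g).sum :=
          (hperm.map g).sum_eq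
        rw [hsum_eq]
        exact sum_inorm_bound g K v hb lam hl01 hlsum hlvec

lemma steinitz {α : Type} (g : α → Fin d → ℤ) (K : ℕ) (l : List α)
    (hb : ∀ a ∈ l, inorm (g a) ≤ K) (h0 : (l.map g).sum = 0) :
    ∃ l' : List α, l'.Perm l ∧ ∀ k, inorm (((l'.take k).map g).sum) ≤ d * K := by
  have hofn : List.ofFn l.get = l := List.ofFn_get l
  by_cases hn : l.length ≤ d
  · refine ⟨l, List.Perm.refl _, fun k => ?_⟩
    have hmem : ∀ w ∈ (l.take k).map g, inorm w ≤ K := by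
      intro w hw
      obtain ⟨a, ha, rfl⟩ := List.mem_map.1 hw
      exact hb a (List.mem_of_mem_take ha)
    have hlen : ((l.take k).map g).length ≤ d := by
      simp only [List.length_map, List.length_take]
      omega
    calc inorm ((l.take k).map g).sum ≤ ((l.take k).map g).length * K := inorm_sum_le _ K hmem
    _ ≤ d * K := Nat.mul_le_mul_right _ hlen
  · push_neg at hn
    have hlen0 : (0:ℚ) < (l.length : ℚ) := by
      have : 0 < l.length := by omega
      exact_mod_cast this
    have hmemb : ∀ i : Fin l.length, inorm (g (l.get i)) ≤ K := by
      intro i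
      exact hb _ (by simpa using List.get_mem l i.1 i.2)
    have hlam0 : ∃ lam : Fin l.length → ℚ, (∀ i, 0 ≤ lam i ∧ lam i ≤ 1) ∧
        (∑ i, lam i) = (l.length : ℚ) - d ∧
        ∀ j : Fin d, ∑ i, lam i * ((g (l.get i)) j : ℚ) = 0 := by
      refine ⟨fun _ => ((l.length : ℚ) - d) / l.length, fun i => ⟨?_, ?_⟩, ?_, ?_⟩
      · apply div_nonneg _ (le_of_lt hlen0)
        have : (d:ℚ) < l.length := by exact_mod_cast hn
        linarith
      · rw [div_le_one hlen0]
        linarith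
      · rw [Finset.sum_const, Finset.card_univ, Fintype.card_fin, nsmul_eq_mul]
        rw [← mul_div_assoc, mul_comm, mul_div_assoc, div_self (ne_of_gt hlen0), mul_one]
      · intro j
        rw [← Finset.mul_sum]
        have hsj : ∑ i : Fin l.length, ((g (l.get i)) j : ℚ) = 0 := by
          have h4 : ((List.ofFn l.get).map g).sum = ∑ i : Fin l.length, g (l.get i) := by
            rw [List.map_ofFn, List.sum_ofFn]
            rfl
          have h5 : (l.map g).sum = ∑ i : Fin l.length, g (l.get i) := by
            rw [← h4]
            exact congrArg (fun L : List α => (L.map g).sum) hofn.symm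
          have h2 : (l.map g).sum j = ∑ i : Fin l.length, g (l.get i) j := by
            rw [h5, Finset.sum_apply]
          have h3 : ∑ i : Fin l.length, g (l.get i) j = 0 := by
            rw [← h2, h0]
            rfl
          exact_mod_cast congrArg (fun z : ℤ => (z : ℚ)) h3
        rw [hsj, mul_zero]
    obtain ⟨l', hperm, hpre⟩ := steinitz_aux g K l.length l.get hmemb hlam0
    rw [hofn] at hperm
    exact ⟨l', hperm, hpre⟩

end Steinitz
section SmallSol

variable {d : ℕ} {I : Finset (Fin d)} {A : Finset (PNAction d)}

lemma list_sum_apply (L : List (Fin d → ℤ)) (i : Fin d) :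
    L.sum i = (L.map (fun v => v i)).sum := by
  induction L with
  | nil => rfl
  | cons v L ih => simp [ih]

lemma list_sum_affine {γ : Type} (C : List γ) (f : γ → ℤ) (a b : ℤ) :
    (C.map (fun c => a * f c - b)).sum = a * (C.map f).sum - C.length * b := by
  induction C with
  | nil => simp
  | cons c C ih =>
    simp only [List.map_cons, List.sum_cons, List.length_cons, ih]
    push_cast
    ring

/-- arithmetic: `((2d+1)M+3)^d < 2(3dM)^d` for `d ≥ 1`, `M ≥ 2`. -/
lemma arith_box_bound {d M : ℕ} (hd : 1 ≤ d) (hM : 2 ≤ M) :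
    ((2*d+1)*M + 3)^d < 2*(3*d*M)^d := by
  match d, hd with
  | 1, _ => simp; nlinarith
  | 2, _ =>
    have h1 : ((2*2+1)*M + 3)^2 = 25*M^2 + 30*M + 9 := by ring
    have h2 : 2*(3*2*M)^2 = 72*M^2 := by ring
    rw [h1, h2]
    nlinarith
  | (n+3), _ =>
    have h1 : (2*(n+3)+1)*M + 3 ≤ 3*(n+3)*M := by nlinarith
    have h2 : ((2*(n+3)+1)*M + 3)^(n+3) ≤ (3*(n+3)*M)^(n+3) :=
      Nat.pow_le_pow_left h1 _
    have h3 : 0 < (3*(n+3)*M)^(n+3) := by positivity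
    omega

lemma smallsol (G : Unfolding d I A) (hd : 1 ≤ d) (hm : 1 ≤ netNorm A) (hr : 2 ≤ G.Q.card)
    (w : Fin d → ℤ) (hw : ∀ i, (w i).natAbs ≤ G.Q.card * netNorm A)
    (hex : ∃ C : List (List (UTrans d I)), (∀ c ∈ C, SCyc G.T c) ∧ (C.map pdisp).sum = w) :
    ∃ C : List (List (UTrans d I)), (∀ c ∈ C, SCyc G.T c) ∧ (C.map pdisp).sum = w ∧
      C.length ≤ G.Q.card * (3 * d * G.Q.card * netNorm A) ^ d - 1 := by
  classical
  set M : ℕ := G.Q.card * netNorm A with hMdef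
  have hM2 : 2 ≤ M := by
    calc 2 = 2 * 1 := by ring
    _ ≤ G.Q.card * netNorm A := Nat.mul_le_mul hr hm
  set X : ℕ := (3 * d * M) ^ d with hXdef
  have hX_eq : (3 * d * G.Q.card * netNorm A) ^ d = X := by
    rw [hXdef, hMdef]
    ring_nf
  have hX1 : 3 * d * M ≤ X := by
    rw [hXdef]
    exact Nat.le_self_pow (by omega) _
  have hXpos : 0 < X := by
    rw [hXdef]
    positivity
  set P : ℕ → Prop := fun n => ∃ C : List (List (UTrans d I)),
    (∀ c ∈ C, SCyc G.T c) ∧ (C.map pdisp).sum = w ∧ C.length = n with hPdef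
  have hPex : ∃ n, P n := by
    obtain ⟨C, h1, h2⟩ := hex
    exact ⟨C.length, C, h1, h2, rfl⟩
  set n₀ : ℕ := Nat.find hPex with hn₀
  obtain ⟨C, hCval, hCsum, hClen⟩ := Nat.find_spec hPex
  by_cases hsmall : n₀ ≤ G.Q.card * (3 * d * G.Q.card * netNorm A) ^ d - 1
  · exact ⟨C, hCval, hCsum, by omega⟩
  -- otherwise, derive a contradiction
  exfalso
  push_neg at hsmall
  rw [hX_eq] at hsmall
  have hbig : 2 * X ≤ n₀ := by
    have h1 : 2 * X ≤ G.Q.card * X := Nat.mul_le_mul_right _ hr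
    omega
  have hdMnat : d * M < n₀ := by
    have h1 : d * M + 1 ≤ 2 * (3 * d * M) := by nlinarith
    omega
  have hdMn : (d:ℤ) * (M:ℤ) < (n₀ : ℤ) := by exact_mod_cast hdMnat
  have hn₀pos : (0:ℤ) < (n₀ : ℤ) := by
    have h3 : 0 < n₀ := by omega
    exact_mod_cast h3
  -- apply the Steinitz lemma
  set K : ℕ := (n₀ + 1) * M with hKdef
  set g : List (UTrans d I) → (Fin d → ℤ) :=
    fun c => (fun i => (n₀ : ℤ) * pdisp c i - w i) with hgdef
  have hgb : ∀ c ∈ C, inorm (g c) ≤ K := by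
    intro c hc
    rw [inorm_le_iff]
    intro i
    have h1 : (pdisp c i).natAbs ≤ M := scyc_pdisp_le G (hCval c hc) i
    have h2 := hw i
    have h3 : ((n₀:ℤ) * pdisp c i - w i).natAbs ≤ n₀ * (pdisp c i).natAbs + (w i).natAbs := by
      have h5 := Int.natAbs_sub_le ((n₀:ℤ) * pdisp c i) (w i)
      have h4 : ((n₀:ℤ) * pdisp c i).natAbs = n₀ * (pdisp c i).natAbs := by
        rw [Int.natAbs_mul]
        simp
      omega
    have h6 : n₀ * (pdisp c i).natAbs ≤ n₀ * M := Nat.mul_le_mul_left n₀ h1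
    calc ((n₀:ℤ) * pdisp c i - w i).natAbs ≤ n₀ * (pdisp c i).natAbs + (w i).natAbs := h3
    _ ≤ n₀ * M + M := by omega
    _ = (n₀ + 1) * M := by ring
  have hg0 : (C.map g).sum = 0 := by
    funext i
    rw [list_sum_apply, List.map_map]
    have hcomp : ((fun v : Fin d → ℤ => v i) ∘ g) = fun c => (n₀:ℤ) * pdisp c i - w i := rfl
    rw [hcomp, list_sum_affine C (fun c => pdisp c i) (n₀:ℤ) (w i)]
    have hmm : (C.map (fun c => pdisp c i)) = (C.map pdisp).map (fun v => v i) := by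
      rw [List.map_map]
      rfl
    have h7 : (C.map (fun c => pdisp c i)).sum = w i := by
      rw [hmm, ← list_sum_apply, hCsum]
    rw [h7, hClen]
    simp [hn₀]
  obtain ⟨l', hperm, hpre⟩ := steinitz g K C hgb hg0
  have hl'len : l'.length = n₀ := by rw [hperm.length_eq, hClen]
  have hl'val : ∀ c ∈ l', SCyc G.T c := fun c hc => hCval c (hperm.mem_iff.1 hc)
  have hl'sum : (l'.map pdisp).sum = w := by rw [(hperm.map pdisp).sum_eq, hCsum]
  -- prefix sums
  set p : ℕ → (Fin d → ℤ) := fun k => ((l'.take k).map pdisp).sum with hp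
  -- injectivity of prefix sums on 0..n₀
  have hinj : ∀ k₁ k₂, k₁ < k₂ → k₂ ≤ n₀ → p k₁ ≠ p k₂ := by
    intro k₁ k₂ hlt hle heq
    have htk : l'.take k₂ = l'.take k₁ ++ (l'.drop k₁).take (k₂ - k₁) := by
      have h8 : k₁ + (k₂ - k₁) = k₂ := by omega
      conv_lhs => rw [← h8]
      exact List.take_add (l := l') (i := k₁) (j := k₂ - k₁)
    have hmidsum : (((l'.drop k₁).take (k₂ - k₁)).map pdisp).sum = 0 := by
      have h1 : p k₂ = p k₁ + ((((l'.drop k₁).take (k₂ - k₁))).map pdisp).sum := by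
        simp only [hp]
        rw [htk, List.map_append, List.sum_append]
      rw [← heq] at h1
      exact (left_eq_add.1 h1)
    set C' : List (List (UTrans d I)) := l'.take k₁ ++ l'.drop k₂ with hC'
    have hC'sum : (C'.map pdisp).sum = w := by
      have hsplit : l' = l'.take k₂ ++ l'.drop k₂ := (List.take_append_drop k₂ l').symm
      have h2 : w = ((l'.take k₂).map pdisp).sum + ((l'.drop k₂).map pdisp).sum := by
        rw [← List.sum_append, ← List.map_append, ← hsplit, hl'sum]
      rw [htk, List.map_append, List.sum_append, hmidsum, add_zero] at h2
      rw [hC', List.map_append, List.sum_append]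
      exact h2.symm
    have hC'len : C'.length < n₀ := by
      rw [hC', List.length_append, List.length_take, List.length_drop, hl'len]
      omega
    have hPC' : P C'.length := by
      refine ⟨C', fun c hc => ?_, hC'sum, rfl⟩
      rcases List.mem_append.1 hc with hc | hc
      · exact hl'val c (List.mem_of_mem_take hc)
      · exact hl'val c (List.mem_of_mem_drop hc)
    exact (Nat.find_min hPex hC'len) hPC'
  -- box membership of prefix sums
  set lo : Fin d → ℤ := fun i => min 0 (w i) - ((d:ℤ) * M + 1) with hlo
  set hi : Fin d → ℤ := fun i => max 0 (w i) + ((d:ℤ) * M + 1) with hhi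
  have hbox : ∀ k ≤ n₀, p k ∈ Finset.Icc lo hi := by
    intro k hk
    have hcoord : ∀ i : Fin d, lo i ≤ p k i ∧ p k i ≤ hi i := by
      intro i
      have h1 := inorm_le_iff.1 (hpre k) i
      have h2 : (((l'.take k).map g).sum) i = (n₀:ℤ) * p k i - (k : ℤ) * w i := by
        rw [list_sum_apply, List.map_map]
        have hcomp : ((fun v : Fin d → ℤ => v i) ∘ g) = fun c => (n₀:ℤ) * pdisp c i - w i := rfl
        rw [hcomp, list_sum_affine _ (fun c => pdisp c i) (n₀:ℤ) (w i)]
        have h3 : ((l'.take k).map (fun c => pdisp c i)).sum = p k i := by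
          simp only [hp]
          rw [list_sum_apply, List.map_map]
          rfl
        rw [h3]
        congr 2
        rw [List.length_take, hl'len]
        omega
      rw [h2] at h1
      have habs : -(((d*K:ℕ)):ℤ) ≤ (n₀:ℤ) * p k i - (k:ℤ) * w i ∧
          ((n₀:ℤ) * p k i - (k:ℤ) * w i) ≤ ((d*K:ℕ):ℤ) := by
        generalize hgen : (n₀:ℤ) * p k i - (k:ℤ) * w i = y at h1 ⊢
        omega
      have hKexp : ((d*K:ℕ):ℤ) = (d:ℤ)*(M:ℤ)*(n₀:ℤ) + (d:ℤ)*(M:ℤ) := by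
        rw [hKdef]
        push_cast
        ring
      rw [hKexp] at habs
      have hkn : (k:ℤ) ≤ (n₀:ℤ) := by exact_mod_cast hk
      have hk0 : (0:ℤ) ≤ (k:ℤ) := by positivity
      have hkw_ub : (k:ℤ) * w i ≤ (n₀:ℤ) * max 0 (w i) := by
        rcases le_or_gt 0 (w i) with hw0 | hw0
        · have hstep1 : (k:ℤ) * w i ≤ (n₀:ℤ) * w i := mul_le_mul_of_nonneg_right hkn hw0
          have hstep2 : (n₀:ℤ) * w i ≤ (n₀:ℤ) * max 0 (w i) :=
            mul_le_mul_of_nonneg_left (le_max_right _ _) (le_of_lt hn₀pos)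
          linarith
        · have hstep1 : (k:ℤ) * w i ≤ 0 :=
            mul_nonpos_of_nonneg_of_nonpos hk0 (le_of_lt hw0)
          have hstep2 : (0:ℤ) ≤ (n₀:ℤ) * max 0 (w i) :=
            mul_nonneg (le_of_lt hn₀pos) (le_max_left _ _)
          linarith
      have hkw_lb : (n₀:ℤ) * min 0 (w i) ≤ (k:ℤ) * w i := by
        rcases le_or_gt 0 (w i) with hw0 | hw0
        · have hstep1 : (n₀:ℤ) * min 0 (w i) ≤ 0 :=
            mul_nonpos_of_nonneg_of_nonpos (le_of_lt hn₀pos) (min_le_left _ _)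
          have hstep2 : (0:ℤ) ≤ (k:ℤ) * w i := mul_nonneg hk0 hw0
          linarith
        · have hstep1 : (n₀:ℤ) * min 0 (w i) ≤ (n₀:ℤ) * w i :=
            mul_le_mul_of_nonneg_left (min_le_right _ _) (le_of_lt hn₀pos)
          have hstep2 : (n₀:ℤ) * w i ≤ (k:ℤ) * w i :=
            mul_le_mul_of_nonpos_right hkn (le_of_lt hw0)
          linarith
      constructor
      · -- lower bound
        have hmul : (n₀:ℤ) * (min 0 (w i) - ((d:ℤ)*M + 1)) ≤ (n₀:ℤ) * p k i := by
          have e1 : (n₀:ℤ) * (min 0 (w i) - ((d:ℤ)*M + 1)) =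
              (n₀:ℤ) * min 0 (w i) - ((d:ℤ)*(M:ℤ)*(n₀:ℤ)) - (n₀:ℤ) := by ring
          rw [e1]
          linarith [habs.1, hkw_lb, hdMn]
        have := le_of_mul_le_mul_left hmul hn₀pos
        simpa [hlo] using this
      · -- upper bound
        have hmul : (n₀:ℤ) * p k i ≤ (n₀:ℤ) * (max 0 (w i) + ((d:ℤ)*M + 1)) := by
          have e1 : (n₀:ℤ) * (max 0 (w i) + ((d:ℤ)*M + 1)) =
              (n₀:ℤ) * max 0 (w i) + ((d:ℤ)*(M:ℤ)*(n₀:ℤ)) + (n₀:ℤ) := by ring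
          rw [e1]
          linarith [habs.2, hkw_ub, hdMn]
        have := le_of_mul_le_mul_left hmul hn₀pos
        simpa [hhi] using this
    rw [Finset.mem_Icc]
    exact ⟨Pi.le_def.2 fun i => (hcoord i).1, Pi.le_def.2 fun i => (hcoord i).2⟩
  -- cardinality contradiction
  have hcard : n₀ + 1 ≤ (Finset.Icc lo hi).card := by
    have hinjcard := Finset.card_le_card_of_injOn (fun k => p k) (s := Finset.range (n₀+1))
      (t := Finset.Icc lo hi) ?_ ?_
    · simpa using hinjcard
    · intro k hk
      have := Finset.mem_range.1 hk
      exact hbox k (by omega)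
    · intro k₁ h₁ k₂ h₂ heq
      simp only [Finset.coe_range, Set.mem_Iio] at h₁ h₂
      by_contra hne
      rcases Nat.lt_or_ge k₁ k₂ with h | h
      · exact hinj k₁ k₂ h (by omega) heq
      · exact hinj k₂ k₁ (by omega) (by omega) heq.symm
  have hcard2 : (Finset.Icc lo hi).card ≤ ((2*d+1)*M + 3)^d := by
    rw [Pi.card_Icc]
    calc ∏ i : Fin d, (Finset.Icc (lo i) (hi i)).card
        ≤ ∏ _i : Fin d, ((2*d+1)*M + 3) := by
          apply Finset.prod_le_prod (fun _ _ => Nat.zero_le _)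
          intro i _
          rw [Int.card_Icc]
          have hwi : (w i).natAbs ≤ M := hw i
          have hwidth : hi i + 1 - lo i ≤ (((2*d+1)*M + 3 : ℕ) : ℤ) := by
            simp only [hhi, hlo]
            have h1 : max 0 (w i) - min 0 (w i) = |w i| := by
              rcases le_or_gt 0 (w i) with h | h
              · rw [max_eq_right h, min_eq_left h, abs_of_nonneg h]
                ring
              · rw [max_eq_left (le_of_lt h), min_eq_right (le_of_lt h), abs_of_neg h]
                ring
            have h2 : |w i| ≤ (M:ℤ) := by
              rw [Int.abs_eq_natAbs]
              exact_mod_cast hwi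
            push_cast
            linarith
          omega
        _ = ((2*d+1)*M + 3)^d := by
          rw [Finset.prod_const, Finset.card_univ, Fintype.card_fin]
  have harith := arith_box_bound hd hM2
  rw [← hXdef] at harith
  omega

end SmallSol
section Assembly

variable {d : ℕ} {I : Finset (Fin d)} {A : Finset (PNAction d)} (G : Unfolding d I A)

/-- Degenerate cases force trivial transitions. -/
lemma edge_eq_of_degenerate {t : UTrans d I} (ht : t ∈ G.T)
    (hdeg : d = 0 ∨ netNorm A = 0) : t.1 = t.2.2 := by
  rcases hdeg with hdeg | hdeg
  · funext i
    subst hdeg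
    exact i.1.elim0
  · obtain ⟨c, h1, h2⟩ := G.T_step t ht
    have hA : t.2.1 ∈ A := (G.T_mem t ht).2.1
    have hz : ∀ i : Fin d, t.2.1.1 i = 0 ∧ t.2.1.2 i = 0 := by
      intro i
      have h3 : anorm t.2.1 ≤ netNorm A := Finset.le_sup hA
      rw [hdeg] at h3
      have h4 : max (t.2.1.1 i) (t.2.1.2 i) ≤ anorm t.2.1 :=
        Finset.le_sup (f := fun i => max (t.2.1.1 i) (t.2.1.2 i)) (Finset.mem_univ i)
      omega
    have hr1 : restrictC I t.2.1.1 = 0 := by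
      funext i
      exact (hz i.1).1
    have hr2 : restrictC I t.2.1.2 = 0 := by
      funext i
      exact (hz i.1).2
    rw [h1, h2, hr1, hr2]

lemma edge_nontrivial {t : UTrans d I} (ht : t ∈ G.T) (hne : t.1 ≠ t.2.2) :
    1 ≤ d ∧ 1 ≤ netNorm A := by
  constructor
  · by_contra h
    exact hne (edge_eq_of_degenerate G ht (Or.inl (by omega)))
  · by_contra h
    exact hne (edge_eq_of_degenerate G ht (Or.inr (by omega)))

/-- A path from inside `S` to outside `S` crosses the boundary. -/
lemma path_crossing {S : Finset (ICfg d I)} :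
    ∀ (π : List (UTrans d I)) (p q : ICfg d I), IsPath G.T π p q → p ∈ S → q ∉ S →
    ∃ t ∈ G.T, t.1 ∈ S ∧ t.2.2 ∉ S := by
  intro π
  induction π with
  | nil =>
    intro p q h hp hq
    cases h
    exact absurd hp hq
  | cons t π ih =>
    intro p q h hp hq
    by_cases hmid : t.2.2 ∈ S
    · exact ih t.2.2 q h.2.2 hmid hq
    · exact ⟨t, h.1, h.2.1 ▸ hp, hmid⟩

/-- Splice a cycle based at a visited state into a cycle. -/
lemma splice {τ : List (UTrans d I)} {q₀ s : ICfg d I} {c : List (UTrans d I)}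
    (hτ : IsPath G.T τ q₀ q₀) (hvis : s ∈ q₀ :: τ.map (fun t => t.2.2))
    (hc : IsPath G.T c s s) :
    ∃ τ', IsPath G.T τ' q₀ q₀ ∧
      (∀ x, x ∈ q₀ :: τ.map (fun t => t.2.2) → x ∈ q₀ :: τ'.map (fun t => t.2.2)) ∧
      (∀ x, x ∈ c.map (fun t => t.2.2) → x ∈ q₀ :: τ'.map (fun t => t.2.2)) ∧
      pdisp τ' = pdisp τ + pdisp c ∧ τ'.length = τ.length + c.length := by
  obtain ⟨τ₁, τ₂, rfl, h1, h2⟩ := isPath_mem_split hτ hvis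
  refine ⟨τ₁ ++ (c ++ τ₂), h1.append (hc.append h2), ?_, ?_, ?_, ?_⟩
  · intro x hx
    simp only [List.map_append, List.mem_cons, List.mem_append] at hx ⊢
    tauto
  · intro x hx
    simp only [List.map_append, List.mem_cons, List.mem_append]
    tauto
  · rw [pdisp_append, pdisp_append, pdisp_append]
    abel
  · simp only [List.length_append]
    omega

lemma scyc_base {c : List (UTrans d I)} (hc : SCyc G.T c) :
    ∃ s ∈ G.Q, IsPath G.T c s s := by
  obtain ⟨⟨s, hpath⟩, hne, _⟩ := hc
  refine ⟨s, ?_, hpath⟩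
  cases c with
  | nil => exact absurd rfl hne
  | cons t π =>
    have ht : t ∈ G.T := hpath.1
    have := (G.T_mem t ht).1
    rwa [hpath.2.1] at this

/-- The growing loop: enlarge the visited set, keeping a zero-displacement certificate. -/
lemma grow (hrev : StructRev G) :
    ∀ (n : ℕ) (S : Finset (ICfg d I)) (q₀ : ICfg d I)
    (_ : q₀ ∈ S) (_ : S ⊆ G.Q) (_ : G.Q.card - S.card ≤ n)
    (τ : List (UTrans d I)) (D : List (List (UTrans d I)))
    (_ : IsPath G.T τ q₀ q₀)
    (_ : ∀ s ∈ S, s ∈ q₀ :: τ.map (fun t => t.2.2))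
    (_ : ∀ c ∈ D, ∃ s ∈ G.Q, IsPath G.T c s s)
    (_ : pdisp τ + (D.map pdisp).sum = 0)
    (_ : τ.length + (D.map List.length).sum ≤
      (S.card - 1) * (G.Q.card * (G.Q.card * (3*d*G.Q.card*netNorm A)^d))),
    ∃ (τ' : List (UTrans d I)) (D' : List (List (UTrans d I))),
      IsPath G.T τ' q₀ q₀ ∧ (∀ s ∈ G.Q, s ∈ q₀ :: τ'.map (fun t => t.2.2)) ∧
      (∀ c ∈ D', ∃ s ∈ G.Q, IsPath G.T c s s) ∧
      pdisp τ' + (D'.map pdisp).sum = 0 ∧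
      τ'.length + (D'.map List.length).sum ≤
        (G.Q.card - 1) * (G.Q.card * (G.Q.card * (3*d*G.Q.card*netNorm A)^d)) := by
  intro n
  induction n with
  | zero =>
    intro S q₀ hq hS hn τ D hτ hvis hD hzero hlen
    by_cases hQS : G.Q ⊆ S
    · have hSQ : S = G.Q := le_antisymm hS hQS
      subst hSQ
      exact ⟨τ, D, hτ, hvis, hD, hzero, hlen⟩
    · exfalso
      obtain ⟨s', hs'Q, hs'S⟩ := Finset.not_subset.1 hQS
      have : S.card < G.Q.card := Finset.card_lt_card (Finset.ssubset_iff_of_subset hS |>.2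
        ⟨s', hs'Q, hs'S⟩)
      omega
  | succ n ih =>
    intro S q₀ hq hS hn τ D hτ hvis hD hzero hlen
    by_cases hQS : G.Q ⊆ S
    · have hSQ : S = G.Q := le_antisymm hS hQS
      subst hSQ
      exact ⟨τ, D, hτ, hvis, hD, hzero, hlen⟩
    obtain ⟨s', hs'Q, hs'S⟩ := Finset.not_subset.1 hQS
    -- find a crossing edge
    obtain ⟨π₀, hπ₀⟩ := G.connected q₀ (hS hq) s' hs'Q
    obtain ⟨t, htT, ht1, ht2⟩ := path_crossing G π₀ q₀ s' hπ₀ hq hs'S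
    have ht2Q : t.2.2 ∈ G.Q := (G.T_mem t htT).2.2
    have htne : t.1 ≠ t.2.2 := fun h => ht2 (h ▸ ht1)
    obtain ⟨hd1, hm1⟩ := edge_nontrivial G htT htne
    have hr2 : 2 ≤ G.Q.card := by
      rw [show (2:ℕ) = 1 + 1 by rfl]
      rw [Nat.add_one_le_iff]
      exact Finset.one_lt_card.2 ⟨t.1, hS ht1, t.2.2, ht2Q, htne⟩
    -- structural reversibility gives a zero cycle through t
    obtain ⟨πr, hπr, hπr0⟩ := hrev t htT
    have hπr0' : pdisp (t :: πr) = 0 := hπr0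
    -- decompose the return path
    obtain ⟨ρ, C, hρ, hρnd, hCval, hCsum⟩ := decompPath πr.length πr t.2.2 t.1 le_rfl hπr
    have htρ : IsPath G.T (t :: ρ) t.1 t.1 := ⟨htT, rfl, hρ⟩
    have htρlen : (t :: ρ).length ≤ G.Q.card := by
      have := nodup_path_length G hρ ht2Q hρnd
      simp only [List.length_cons]
      omega
    -- the correction target
    set w : Fin d → ℤ := (C.map pdisp).sum with hw
    have hzero2 : pdisp (t :: ρ) + w = 0 := by
      have hCs : (C.map pdisp).sum = pdisp πr - pdisp ρ := eq_sub_of_add_eq' hCsum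
      have heq : pdisp (t :: ρ) + w = pdisp (t :: πr) := by
        rw [hw, hCs, pdisp_cons, pdisp_cons]
        abel
      rw [heq, hπr0']
    have hwb : ∀ i, (w i).natAbs ≤ G.Q.card * netNorm A := by
      intro i
      have h1 : w i = -(pdisp (t :: ρ) i) := by
        have := congrArg (fun v : Fin d → ℤ => v i) hzero2
        simp only [Pi.add_apply, Pi.zero_apply] at this
        omega
      rw [h1, Int.natAbs_neg]
      calc (pdisp (t :: ρ) i).natAbs ≤ (t :: ρ).length * netNorm A := pdisp_natAbs_le G htρ i
      _ ≤ G.Q.card * netNorm A := Nat.mul_le_mul_right _ htρlen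
    -- small solution
    obtain ⟨C', hC'val, hC'sum, hC'len⟩ := smallsol G hd1 hm1 hr2 w hwb ⟨C, hCval, hw.symm⟩
    -- splice (t :: ρ) into τ at t.1
    obtain ⟨τ₁, hτ₁, hτ₁vis, hτ₁new, hτ₁disp, hτ₁len⟩ :=
      splice G hτ (hvis t.1 ht1) htρ
    -- invariant for the extended set
    set Snew : Finset (ICfg d I) := insert t.2.2 S with hSnew
    have hq' : q₀ ∈ Snew := Finset.mem_insert_of_mem hq
    have hS' : Snew ⊆ G.Q := Finset.insert_subset ht2Q hS
    have hcard' : Snew.card = S.card + 1 := Finset.card_insert_of_notMem ht2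
    have hvis' : ∀ s ∈ Snew, s ∈ q₀ :: τ₁.map (fun t => t.2.2) := by
      intro s hs
      rcases Finset.mem_insert.1 hs with rfl | hs
      · apply hτ₁new
        simp
      · exact hτ₁vis s (hvis s hs)
    set D₁ : List (List (UTrans d I)) := D ++ C' with hD₁
    have hD₁val : ∀ c ∈ D₁, ∃ s ∈ G.Q, IsPath G.T c s s := by
      intro c hc
      rcases List.mem_append.1 hc with hc | hc
      · exact hD c hc
      · exact scyc_base G (hC'val c hc)
    have hzero' : pdisp τ₁ + (D₁.map pdisp).sum = 0 := by
      rw [hD₁, List.map_append, List.sum_append, hτ₁disp, hC'sum]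
      calc pdisp τ + pdisp (t :: ρ) + ((D.map pdisp).sum + w)
          = (pdisp τ + (D.map pdisp).sum) + (pdisp (t :: ρ) + w) := by abel
      _ = 0 := by rw [hzero, hzero2]; abel
    -- length bookkeeping
    set X : ℕ := (3*d*G.Q.card*netNorm A)^d with hX
    have hXpos : 1 ≤ X := by
      rw [hX]
      apply Nat.one_le_iff_ne_zero.2
      apply pow_ne_zero
      have hpos : 0 < 3*d*G.Q.card*netNorm A := by
        have h1 : 0 < 3*d := by omega
        have h2 : 0 < G.Q.card := by omega
        have h3 : 0 < netNorm A := by omega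
        exact Nat.mul_pos (Nat.mul_pos h1 h2) h3
      exact Nat.pos_iff_ne_zero.1 hpos
    set B : ℕ := G.Q.card * X with hB
    have hBpos : 1 ≤ B := by
      rw [hB]
      exact Nat.mul_pos (by omega) hXpos
    have hsumC' : ((C'.map List.length).sum) ≤ (B - 1) * G.Q.card := by
      calc (C'.map List.length).sum ≤ (C'.map List.length).length • G.Q.card := by
            apply List.sum_le_card_nsmul
            intro x hx
            obtain ⟨c, hc, rfl⟩ := List.mem_map.1 hx
            exact scyc_length_le G (hC'val c hc)
      _ = C'.length * G.Q.card := by simp [smul_eq_mul]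
      _ ≤ (B - 1) * G.Q.card := Nat.mul_le_mul_right _ hC'len
    have hstep : τ₁.length + (D₁.map List.length).sum ≤
        (Snew.card - 1) * (G.Q.card * B) := by
      rw [hD₁, List.map_append, List.sum_append, hτ₁len, hcard']
      have h3 : (t :: ρ).length + (C'.map List.length).sum ≤ G.Q.card * B := by
        calc (t :: ρ).length + (C'.map List.length).sum
            ≤ G.Q.card + (B - 1) * G.Q.card := Nat.add_le_add htρlen hsumC'
        _ = G.Q.card * B := by
            have hb' : B - 1 + 1 = B := by omega
            calc G.Q.card + (B-1)*G.Q.card = ((B-1)+1)*G.Q.card := by ring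
            _ = B * G.Q.card := by rw [hb']
            _ = G.Q.card * B := Nat.mul_comm _ _
      calc τ.length + (t :: ρ).length + ((D.map List.length).sum + (C'.map List.length).sum)
          = (τ.length + (D.map List.length).sum) + ((t :: ρ).length + (C'.map List.length).sum)
            := by ring
      _ ≤ (S.card - 1) * (G.Q.card * B) + G.Q.card * B := Nat.add_le_add hlen h3
      _ ≤ (S.card + 1 - 1) * (G.Q.card * B) := by
          have h4 : (S.card - 1) + 1 ≤ S.card := by
            have : 1 ≤ S.card := Finset.card_pos.2 ⟨q₀, hq⟩
            omega
          have h5 : ((S.card - 1) + 1) * (G.Q.card * B) ≤ S.card * (G.Q.card * B) :=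
            Nat.mul_le_mul_right _ h4
          rw [Nat.add_mul] at h5
          simpa using h5
    -- recurse
    have hn' : G.Q.card - Snew.card ≤ n := by
      have : S.card < G.Q.card := Finset.card_lt_card
        (Finset.ssubset_iff_of_subset hS |>.2 ⟨s', hs'Q, hs'S⟩)
      omega
    exact ih Snew q₀ hq' hS' hn' τ₁ D₁ hτ₁ hvis' hD₁val hzero' hstep

/-- Insert all debt cycles into a full-state cycle. -/
lemma insertAll :
    ∀ (D : List (List (UTrans d I))) (τ : List (UTrans d I)) (q₀ : ICfg d I),
    IsPath G.T τ q₀ q₀ → (∀ c ∈ D, ∃ s ∈ G.Q, IsPath G.T c s s) →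
    (∀ s ∈ G.Q, s ∈ q₀ :: τ.map (fun t => t.2.2)) →
    ∃ W, IsPath G.T W q₀ q₀ ∧ (∀ s ∈ G.Q, s ∈ q₀ :: W.map (fun t => t.2.2)) ∧
      pdisp W = pdisp τ + (D.map pdisp).sum ∧
      W.length = τ.length + (D.map List.length).sum := by
  intro D
  induction D with
  | nil =>
    intro τ q₀ hτ _ hvis
    exact ⟨τ, hτ, hvis, by simp, by simp⟩
  | cons c D ih =>
    intro τ q₀ hτ hD hvis
    obtain ⟨s, hsQ, hc⟩ := hD c (List.mem_cons_self)
    obtain ⟨τ₁, hτ₁, hτ₁vis, _, hτ₁disp, hτ₁len⟩ := splice G hτ (hvis s hsQ) hc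
    obtain ⟨W, hW, hWvis, hWdisp, hWlen⟩ := ih τ₁ q₀ hτ₁
      (fun c' hc' => hD c' (List.mem_cons_of_mem _ hc'))
      (fun s hs => hτ₁vis s (hvis s hs))
    refine ⟨W, hW, hWvis, ?_, ?_⟩
    · rw [hWdisp, hτ₁disp]
      simp only [List.map_cons, List.sum_cons]
      abel
    · rw [hWlen, hτ₁len]
      simp only [List.map_cons, List.sum_cons]
      omega

end Assembly
/-- In a structurally-reversible `I`-unfolding `G` with `r = |Q|`
and `m = ‖A‖∞`, the displacement of every simple cycle is the displacement of a
full-state cycle of length at most `r²(r−1)(3drm)^d + r`. -/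
theorem simple_cycle_to_full_state_cycle {d : ℕ} {I : Finset (Fin d)}
    {A : Finset (PNAction d)} (G : Unfolding d I A) (hrev : StructRev G)
    (q₀ : ICfg d I) (hq₀ : q₀ ∈ G.Q) (θs : List (UTrans d I))
    (hθs : SimpleCycle G.T θs q₀) :
    ∃ (q : ICfg d I) (θ : List (UTrans d I)),
      q ∈ G.Q ∧ IsPath G.T θ q q ∧ FullState G q θ ∧ pdisp θ = pdisp θs ∧
      θ.length ≤ G.Q.card ^ 2 * (G.Q.card - 1) *
        (3 * d * G.Q.card * netNorm A) ^ d + G.Q.card := by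
  obtain ⟨hθpath, hθne, hθnd⟩ := hθs
  -- grow a full-state tour with a zero-displacement certificate
  obtain ⟨τ, D, hτ, hvisQ, hD, hzero, hlen⟩ :=
    grow G hrev G.Q.card {q₀} q₀ (Finset.mem_singleton_self q₀)
      (Finset.singleton_subset_iff.2 hq₀) (by omega) [] [] rfl
      (by intro s hs; rw [Finset.mem_singleton] at hs; simp [hs])
      (by simp) (by simp [pdisp_nil]) (by simp)
  -- insert the debt cycles
  obtain ⟨W, hW, hWvis, hWdisp, hWlen⟩ := insertAll G D τ q₀ hτ hD hvisQ
  have hWdisp0 : pdisp W = 0 := by rw [hWdisp, hzero]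
  have hWlen' : W.length ≤
      (G.Q.card - 1) * (G.Q.card * (G.Q.card * (3*d*G.Q.card*netNorm A)^d)) := by
    rw [hWlen]
    exact hlen
  -- assemble
  refine ⟨q₀, θs ++ W, hq₀, hθpath.append hW, ?_, ?_, ?_⟩
  · intro s hs
    rcases List.mem_cons.1 (hWvis s hs) with h | h
    · exact h ▸ List.mem_cons_self
    · refine List.mem_cons.2 (Or.inr ?_)
      rw [List.map_append]
      exact List.mem_append_right _ h
  · rw [pdisp_append, hWdisp0, add_zero]
  · have hθslen : θs.length ≤ G.Q.card := by
      have := nodup_length_le G hθnd (hθpath.states_mem G)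
      simpa using this
    set X : ℕ := (3 * d * G.Q.card * netNorm A) ^ d with hX
    set y : ℕ := G.Q.card - 1 with hy
    have heq : y * (G.Q.card * (G.Q.card * X)) = G.Q.card ^ 2 * y * X := by ring
    calc (θs ++ W).length = θs.length + W.length := List.length_append
    _ ≤ G.Q.card + y * (G.Q.card * (G.Q.card * X)) := Nat.add_le_add hθslen hWlen'
    _ = G.Q.card ^ 2 * y * X + G.Q.card := by rw [heq]; exact Nat.add_comm _ _
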